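/- For the family of binary distributions with P(A=0,B=0,C=0,D=1) = P(A=0,B=1,C=0,D=0) = P(A=1,B=0,C=0,D=1) = P(A=1,B=1,C=0,D=1) = (1-ε)/4 and P(A=1,B=0,C=1,D=1) = ε, as ε → 0 one has I(C:D) = Θ(ε) while I(A:B) = O(ε²). In particular, for every κ > 0 there exists ε₀ > 0 such that for all 0 < ε < ε₀, I(C:D) > κ·I(A:B). -/

import Mathlib

open scoped BigOperators Classical

noncomputable section

/-- `p` is a probability mass function on the finite type `Ω`. -/
def IsPMF {Ω : Type*} [Fintype Ω] (p : Ω → ℝ) : Prop :=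
  (∀ ω, 0 ≤ p ω) ∧ ∑ ω, p ω = 1

/-- Probability of the event `X = s` under `p`. -/
def prOf {Ω S : Type*} [Fintype Ω] [DecidableEq S] (p : Ω → ℝ) (X : Ω → S) (s : S) : ℝ :=
  ∑ ω ∈ Finset.univ.filter (fun ω => X ω = s), p ω

/-- Shannon entropy (in bits) of the random variable `X` under the pmf `p`. -/
def ent {Ω S : Type*} [Fintype Ω] [Fintype S] [DecidableEq S] (p : Ω → ℝ) (X : Ω → S) : ℝ :=
  - ∑ s : S, prOf p X s * Real.logb 2 (prOf p X s)

/-- Mutual information `I(X:Y) = H(X) + H(Y) - H(X,Y)`. -/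
def mi {Ω S T : Type*} [Fintype Ω] [Fintype S] [Fintype T] [DecidableEq S] [DecidableEq T]
    (p : Ω → ℝ) (X : Ω → S) (Y : Ω → T) : ℝ :=
  ent p X + ent p Y - ent p (fun ω => (X ω, Y ω))

/-- Conditional mutual information `I(X:Y|Z) = H(X,Z) + H(Y,Z) - H(X,Y,Z) - H(Z)`. -/
def cmi {Ω S T U : Type*} [Fintype Ω] [Fintype S] [Fintype T] [Fintype U]
    [DecidableEq S] [DecidableEq T] [DecidableEq U]
    (p : Ω → ℝ) (X : Ω → S) (Y : Ω → T) (Z : Ω → U) : ℝ :=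
  ent p (fun ω => (X ω, Z ω)) + ent p (fun ω => (Y ω, Z ω))
    - ent p (fun ω => (X ω, Y ω, Z ω)) - ent p Z

/-- Conditional entropy `H(X|Y) = H(X,Y) - H(Y)`. -/
def condEnt {Ω S T : Type*} [Fintype Ω] [Fintype S] [Fintype T] [DecidableEq S] [DecidableEq T]
    (p : Ω → ℝ) (X : Ω → S) (Y : Ω → T) : ℝ :=
  ent p (fun ω => (X ω, Y ω)) - ent p Y

/-- The four coordinate random variables on `Bool × Bool × Bool × Bool`. -/
def vA : Bool × Bool × Bool × Bool → Bool := fun ω => ω.1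
def vB : Bool × Bool × Bool × Bool → Bool := fun ω => ω.2.1
def vC : Bool × Bool × Bool × Bool → Bool := fun ω => ω.2.2.1
def vD : Bool × Bool × Bool × Bool → Bool := fun ω => ω.2.2.2

/-- The witness distribution of Theorem 3(a). -/
def p10 (ε : ℝ) : Bool × Bool × Bool × Bool → ℝ := fun ω =>
  if ω = (false, false, false, true) then (1 - ε) / 4
  else if ω = (false, true, false, false) then (1 - ε) / 4
  else if ω = (true, false, false, true) then (1 - ε) / 4
  else if ω = (true, true, false, true) then (1 - ε) / 4
  else if ω = (true, false, true, true) then ε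
  else 0

/-!
With `H(X) · log 2 = ∑ₛ negMulLog P(X = s)` and `negMulLog (a * b) = b · negMulLog a + a · negMulLog b`,
all probabilities `c · (1 + t)` with `t = O(ε)` split off their constant factor `c`, and the
`negMulLog c` terms cancel up to `ε · log (4/3)` in `I(C:D)` and completely in `I(A:B)`. What is
left is a combination of `negMulLog (1 + t)`, which the tangent bounds
`-t - t² ≤ negMulLog (1 + t) ≤ -t` control: the linear parts add up to `ε · log (4/3)` for `I(C:D)`
and to `0` for `I(A:B)`, so only the `t²` errors remain there.
-/

open Real

lemma ent_mul_log_two {Ω S : Type*} [Fintype Ω] [Fintype S] [DecidableEq S]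
    (p : Ω → ℝ) (X : Ω → S) :
    ent p X * log 2 = ∑ s, negMulLog (prOf p X s) := by
  have : log 2 ≠ 0 := (log_pos one_lt_two).ne'
  simp only [ent, logb, negMulLog, Finset.sum_mul, neg_mul, Finset.sum_neg_distrib]
  congr 1
  refine Finset.sum_congr rfl fun s _ => ?_
  field_simp

lemma mi_mul_log_two {Ω S T : Type*} [Fintype Ω] [Fintype S] [Fintype T] [DecidableEq S]
    [DecidableEq T] (p : Ω → ℝ) (X : Ω → S) (Y : Ω → T) :
    mi p X Y * log 2 = ∑ s, negMulLog (prOf p X s) + ∑ t, negMulLog (prOf p Y t)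
      - ∑ st, negMulLog (prOf p (fun ω => (X ω, Y ω)) st) := by
  simp only [mi, add_mul, sub_mul, ent_mul_log_two]

lemma Real.mul_one_sub_le_negMulLog {x : ℝ} (hx : 0 ≤ x) : x * (1 - x) ≤ negMulLog x := by
  rcases hx.eq_or_lt with rfl | hx
  · simp
  · have := mul_le_mul_of_nonneg_left (log_le_sub_one_of_pos hx) hx.le
    rw [negMulLog]
    linarith

lemma mi_p10_CD_mul_log_two (ε : ℝ) :
    mi (p10 ε) vC vD * log 2
      = ε * log (4 / 3) + negMulLog (1 - ε) / 4 + 3 / 4 * negMulLog (1 + ε / 3) := by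
  have h : mi (p10 ε) vC vD * log 2
      = negMulLog (1 - ε) + negMulLog (3 / 4 * (1 + ε / 3)) - negMulLog (3 / 4 * (1 - ε)) := by
    rw [mi_mul_log_two]
    simp only [prOf, Finset.sum_filter]
    simp only [Fintype.sum_prod_type, Fintype.sum_bool, p10, vC, vD,
      Prod.mk.injEq, reduceCtorEq, ite_true, ite_false, and_true, and_false,
      add_zero, negMulLog_zero]
    ring_nf
  have h34 : negMulLog (3 / 4) = 3 / 4 * log (4 / 3) := by
    rw [negMulLog, ← inv_div, log_inv]; ring
  rw [h, negMulLog_mul, negMulLog_mul, h34]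
  ring

lemma mi_p10_AB_mul_log_two (ε : ℝ) :
    mi (p10 ε) vA vB * log 2
      = (negMulLog (1 - ε) - negMulLog (1 + 3 * ε)) / 4 + negMulLog (1 + ε) := by
  have h : mi (p10 ε) vA vB * log 2
      = 2 * negMulLog (1 / 2 * (1 - ε)) + 2 * negMulLog (1 / 2 * (1 + ε))
        - 3 * negMulLog (1 / 4 * (1 - ε)) - negMulLog (1 / 4 * (1 + 3 * ε)) := by
    rw [mi_mul_log_two]
    simp only [prOf, Finset.sum_filter]
    simp only [Fintype.sum_prod_type, Fintype.sum_bool, p10, vA, vB,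
      Prod.mk.injEq, reduceCtorEq, ite_true, ite_false, and_true, and_false,
      add_zero]
    ring_nf
  have h14 : negMulLog (1 / 4) = negMulLog (1 / 2) := by
    rw [show (1 / 4 : ℝ) = 1 / 2 * (1 / 2) by norm_num, negMulLog_mul]; ring
  rw [h, negMulLog_mul, negMulLog_mul, negMulLog_mul, negMulLog_mul, h14]
  ring

section Bounds

variable {ε : ℝ}

lemma mi_p10_CD_mul_log_two_le (h₀ : -3 ≤ ε) (h₁ : ε ≤ 1) :
    mi (p10 ε) vC vD * log 2 ≤ ε * log (4 / 3) := by
  have hsub := negMulLog_le_one_sub_self (x := 1 - ε) (by linarith)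
  have hadd := negMulLog_le_one_sub_self (x := 1 + ε / 3) (by linarith)
  rw [mi_p10_CD_mul_log_two]
  linarith

lemma le_mi_p10_CD_mul_log_two (h₀ : -3 ≤ ε) (h₁ : ε ≤ 1) :
    ε * log (4 / 3) - ε ^ 2 / 3 ≤ mi (p10 ε) vC vD * log 2 := by
  have hsub := mul_one_sub_le_negMulLog (x := 1 - ε) (by linarith)
  have hadd := mul_one_sub_le_negMulLog (x := 1 + ε / 3) (by linarith)
  rw [mi_p10_CD_mul_log_two]
  nlinarith

lemma mi_p10_AB_mul_log_two_le (h₀ : -1 / 3 ≤ ε) (h₁ : ε ≤ 1) :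
    mi (p10 ε) vA vB * log 2 ≤ 9 / 4 * ε ^ 2 := by
  have hsub := negMulLog_le_one_sub_self (x := 1 - ε) (by linarith)
  have hadd := negMulLog_le_one_sub_self (x := 1 + ε) (by linarith)
  have hadd₃ := mul_one_sub_le_negMulLog (x := 1 + 3 * ε) (by linarith)
  rw [mi_p10_AB_mul_log_two]
  nlinarith

lemma mi_p10_bounds (h₀ : 0 ≤ ε) (h₁ : ε ≤ 1 / 4) :
    ε / 6 ≤ mi (p10 ε) vC vD ∧ mi (p10 ε) vC vD ≤ ε ∧ mi (p10 ε) vA vB ≤ 5 * ε ^ 2 := by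
  have hlog43 : 1 / 4 ≤ log (4 / 3) := by
    have := one_sub_inv_le_log_of_pos (x := 4 / 3) (by norm_num)
    norm_num at this ⊢; linarith
  have hlog43' : log (4 / 3) ≤ 1 / 3 := by
    have := log_le_sub_one_of_pos (x := 4 / 3) (by norm_num)
    linarith
  have hlog2 : 1 / 2 < log 2 := by have := log_two_gt_d9; linarith
  have hlog2' : log 2 < 1 := by have := log_two_lt_d9; linarith
  have hCD := mi_p10_CD_mul_log_two_le (ε := ε) (by linarith) (by linarith)
  have hCD' := le_mi_p10_CD_mul_log_two (ε := ε) (by linarith) (by linarith)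
  have hAB := mi_p10_AB_mul_log_two_le (ε := ε) (by linarith) (by linarith)
  refine ⟨?_, ?_, ?_⟩ <;> nlinarith

end Bounds

theorem p10_asymptotics :
    (∃ c₁ c₂ ε₀ : ℝ, 0 < c₁ ∧ 0 < c₂ ∧ 0 < ε₀ ∧
      ∀ ε : ℝ, 0 < ε → ε < ε₀ →
        c₁ * ε ≤ mi (p10 ε) vC vD ∧ mi (p10 ε) vC vD ≤ c₂ * ε ∧
          mi (p10 ε) vA vB ≤ c₂ * ε ^ 2) ∧
    (∀ κ : ℝ, 0 < κ → ∃ ε₀ : ℝ, 0 < ε₀ ∧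
      ∀ ε : ℝ, 0 < ε → ε < ε₀ →
        κ * mi (p10 ε) vA vB < mi (p10 ε) vC vD) := by
  refine ⟨⟨1 / 6, 5, 1 / 4, by norm_num, by norm_num, by norm_num, fun ε h₀ h₁ => ?_⟩,
    fun κ hκ => ⟨min (1 / 4) (1 / (30 * κ)), by positivity, fun ε h₀ h₁ => ?_⟩⟩
  · obtain ⟨hCD, hCD', hAB⟩ := mi_p10_bounds h₀.le h₁.le
    exact ⟨by linarith, by linarith, hAB⟩
  · obtain ⟨hCD, -, hAB⟩ := mi_p10_bounds h₀.le (h₁.le.trans (min_le_left _ _))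
    have hκε : 30 * κ * ε < 1 := by
      have := h₁.trans_le (min_le_right _ _)
      rwa [lt_div_iff₀ (by positivity), mul_comm] at this
    calc κ * mi (p10 ε) vA vB ≤ κ * (5 * ε ^ 2) := by gcongr
      _ < ε / 6 := by nlinarith
      _ ≤ mi (p10 ε) vC vD := hCD

end
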